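/- Consider T differentiable loss functions Lᵢ : E × F → ℝ on a product of real inner product spaces, with gradients gᵢ = ∇_y Lᵢ(x, y) with respect to the second argument at a common point (x₀, y₀). Let w₁,…,w_T ≥ 0 sum to 1, and let ḡ = ∑ᵢ wᵢ gᵢ. Suppose for every i, ⟪gᵢ - ḡ, gᵢ⟫ > 0. Then there exists α₀ > 0 such that for all α ∈ (0, α₀): ∑ᵢ Lᵢ(x₀, y₀ - α gᵢ) < ∑ᵢ Lᵢ(x₀, y₀ - α ḡ). -/

import Mathlib

/-! The gap `t ↦ ∑ᵢ Lᵢ(x₀, y₀ - t gᵢ) - ∑ᵢ Lᵢ(x₀, y₀ - t ḡ)` vanishes at `t = 0`, and by the chain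
rule its derivative there is `∑ᵢ (⟪gᵢ, ḡ⟫ - ⟪gᵢ, gᵢ⟫) = -∑ᵢ ⟪gᵢ - ḡ, gᵢ⟫ < 0`, so the gap is negative
for all small `t > 0`. -/

open scoped InnerProductSpace Topology
open Filter

theorem HasDerivAt.eventually_nhdsGT_lt_of_neg {f : ℝ → ℝ} {f' x : ℝ} (hf : HasDerivAt f f' x)
    (hf' : f' < 0) : ∀ᶠ z in 𝓝[>] x, f z < f x := by
  filter_upwards [hf.hasDerivWithinAt.limsup_slope_le' (lt_irrefl x) hf', self_mem_nhdsWithin]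
    with z hslope hxz
  exact (slope_neg_iff_of_le (le_of_lt hxz)).1 hslope

section Gradient

variable {F : Type*} [NormedAddCommGroup F] [InnerProductSpace ℝ F] [CompleteSpace F]

theorem HasGradientAt.hasDerivAt_sub_smul {f : F → ℝ} {g y : F} (hf : HasGradientAt f g y)
    (v : F) : HasDerivAt (fun t : ℝ => f (y - t • v)) (-⟪g, v⟫_ℝ) 0 := by
  have hline : HasDerivAt (fun t : ℝ => y - t • v) (-v) 0 := by
    simpa using ((hasDerivAt_id (0 : ℝ)).smul_const v).const_sub y
  have hf' : HasFDerivAt f (InnerProductSpace.toDual ℝ F g) (y - (0 : ℝ) • v) := by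
    simpa using hf.hasFDerivAt
  simpa [Function.comp_def] using hf'.comp_hasDerivAt 0 hline

theorem eventually_sum_sub_smul_lt_of_sum_inner_pos {ι : Type*} (s : Finset ι) {f : ι → F → ℝ}
    {g : ι → F} {y : F} (hf : ∀ i ∈ s, HasGradientAt (f i) (g i) y) (v : F)
    (hpos : 0 < ∑ i ∈ s, ⟪g i - v, g i⟫_ℝ) :
    ∀ᶠ t in 𝓝[>] (0 : ℝ), ∑ i ∈ s, f i (y - t • g i) < ∑ i ∈ s, f i (y - t • v) := by
  set gap : ℝ → ℝ := fun t => ∑ i ∈ s, (f i (y - t • g i) - f i (y - t • v))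
  have hgap : HasDerivAt gap (∑ i ∈ s, (-⟪g i, g i⟫_ℝ - -⟪g i, v⟫_ℝ)) 0 :=
    HasDerivAt.fun_sum fun i hi =>
      ((hf i hi).hasDerivAt_sub_smul (g i)).sub ((hf i hi).hasDerivAt_sub_smul v)
  have hslope : ∑ i ∈ s, (-⟪g i, g i⟫_ℝ - -⟪g i, v⟫_ℝ) = -∑ i ∈ s, ⟪g i - v, g i⟫_ℝ := by
    rw [← Finset.sum_neg_distrib]
    refine Finset.sum_congr rfl fun i _ => ?_
    rw [inner_sub_left, real_inner_comm v]
    ring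
  rw [hslope] at hgap
  filter_upwards [hgap.eventually_nhdsGT_lt_of_neg (neg_neg_of_pos hpos)] with t ht
  simpa [gap, Finset.sum_sub_distrib] using ht

end Gradient

theorem stmt_6_general {E F : Type*} [NormedAddCommGroup E] [InnerProductSpace ℝ E]
    [NormedAddCommGroup F] [InnerProductSpace ℝ F] [CompleteSpace F]
    {T : ℕ} (L : Fin T → E × F → ℝ) (x₀ : E) (y₀ : F) (g : Fin T → F)
    (hL : ∀ i, HasGradientAt (fun y => L i (x₀, y)) (g i) y₀)
    (w : Fin T → ℝ) (hw1 : ∑ i, w i = 1)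
    (hconf : ∀ i, ⟪g i - ∑ j, w j • g j, g i⟫_ℝ > 0) :
    ∃ α₀ > 0, ∀ α : ℝ, 0 < α → α < α₀ →
      ∑ i, L i (x₀, y₀ - α • g i) < ∑ i, L i (x₀, y₀ - α • ∑ j, w j • g j) := by
  have hne : (Finset.univ : Finset (Fin T)).Nonempty := by
    by_contra h
    simp [Finset.not_nonempty_iff_eq_empty.1 h] at hw1
  have hev := eventually_sum_sub_smul_lt_of_sum_inner_pos Finset.univ (fun i _ => hL i)
    (∑ j, w j • g j) (Finset.sum_pos (fun i _ => hconf i) hne)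
  obtain ⟨α₀, hα₀, hsmall⟩ := (nhdsGT_basis (0 : ℝ)).eventually_iff.1 hev
  exact ⟨α₀, hα₀, fun α hα hαα₀ => hsmall ⟨hα, hαα₀⟩⟩

theorem stmt_6 {E F : Type*} [NormedAddCommGroup E] [InnerProductSpace ℝ E]
    [NormedAddCommGroup F] [InnerProductSpace ℝ F] [CompleteSpace F]
    {T : ℕ} (L : Fin T → E × F → ℝ) (x₀ : E) (y₀ : F) (g : Fin T → F)
    (hL : ∀ i, HasGradientAt (fun y => L i (x₀, y)) (g i) y₀)
    (w : Fin T → ℝ) (hw0 : ∀ i, 0 ≤ w i) (hw1 : ∑ i, w i = 1)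
    (hconf : ∀ i, ⟪g i - ∑ j, w j • g j, g i⟫_ℝ > 0) :
    ∃ α₀ > 0, ∀ α : ℝ, 0 < α → α < α₀ →
      ∑ i, L i (x₀, y₀ - α • g i) < ∑ i, L i (x₀, y₀ - α • ∑ j, w j • g j) :=
  stmt_6_general L x₀ y₀ g hL w hw1 hconf
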